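/- arXiv:2009.01667 — 4 statements merged into one kernel-verified Lean document; each statement's English description precedes it below -/
import Mathlib

section
/- For every positive integer m, we have 8·∑_{d∣m} (-1)^{m+d} d = 8·|2^{k+1} − 3|·σ(m/2^k), where 2^k is the exact power of 2 dividing m (i.e., 2^k ∣ m and 2^{k+1} ∤ m) and σ denotes the sum-of-divisors function. -/
/-!
Writing `m = 2 ^ k * m'` with `m'` odd: since `(-1) ^ d * d = d - 2 * d * [d odd]`, the alternating
divisor sum equals `(-1) ^ m * (σ(m) - 2 * σ(m'))`, the odd divisors of `m` being those of `m'`.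
By multiplicativity `σ(m) = (2 ^ (k + 1) - 1) * σ(m')`, so the sum is
`(-1) ^ m * (2 ^ (k + 1) - 3) * σ(m')`, and the sign `(-1) ^ m` is exactly that of `2 ^ (k + 1) - 3`.
-/

def sigma (n : ℕ) : ℕ := ∑ d ∈ n.divisors, d

open Finset

lemma sum_neg_one_pow_mul_self (s : Finset ℕ) :
    ∑ d ∈ s, (-1 : ℤ) ^ d * d = ∑ d ∈ s, (d : ℤ) - 2 * ∑ d ∈ s.filter Odd, (d : ℤ) := by
  rw [sum_filter, mul_sum, ← sum_sub_distrib]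
  refine sum_congr rfl fun d _ => ?_
  rcases Nat.even_or_odd d with hd | hd
  · simp [hd.neg_one_pow, Nat.not_odd_iff_even.mpr hd]
  · rw [hd.neg_one_pow, if_pos hd]
    ring

lemma filter_odd_divisors_two_pow_mul {m : ℕ} (hm : Odd m) (k : ℕ) :
    (2 ^ k * m).divisors.filter Odd = m.divisors := by
  ext d
  simp only [mem_filter, Nat.mem_divisors]
  constructor
  · rintro ⟨⟨hd, -⟩, hd_odd⟩
    exact ⟨(Nat.Coprime.pow_right k (Nat.coprime_two_right.mpr hd_odd)).dvd_of_dvd_mul_left hd,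
      hm.pos.ne'⟩
  · rintro ⟨hd, -⟩
    exact ⟨⟨hd.mul_left _, mul_ne_zero (by positivity) hm.pos.ne'⟩, hm.of_dvd_nat hd⟩

lemma sigma_two_pow (k : ℕ) : (sigma (2 ^ k) : ℤ) = 2 ^ (k + 1) - 1 := by
  rw [sigma, Nat.sum_divisors_prime_pow Nat.prime_two, ← geom_sum_mul]
  norm_num

lemma sigma_two_pow_mul {m : ℕ} (hm : Odd m) (k : ℕ) :
    (sigma (2 ^ k * m) : ℤ) = (2 ^ (k + 1) - 1) * sigma m := by
  rw [← sigma_two_pow, sigma, sigma, sigma,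
    Nat.Coprime.sum_divisors_mul (Nat.Coprime.pow_left k (Nat.coprime_two_left.mpr hm)),
    Nat.cast_mul]

lemma sum_divisors_two_pow_mul_neg_one_pow_mul {m : ℕ} (hm : Odd m) (k : ℕ) :
    ∑ d ∈ (2 ^ k * m).divisors, (-1 : ℤ) ^ d * d = (2 ^ (k + 1) - 3) * sigma m := by
  rw [sum_neg_one_pow_mul_self, ← Nat.cast_sum, ← sigma, filter_odd_divisors_two_pow_mul hm,
    sigma_two_pow_mul hm, ← Nat.cast_sum, ← sigma]
  ring

lemma neg_one_pow_two_pow_mul_mul_eq_abs {m : ℕ} (hm : Odd m) (k : ℕ) :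
    (-1 : ℤ) ^ (2 ^ k * m) * (2 ^ (k + 1) - 3) = |(2 : ℤ) ^ (k + 1) - 3| := by
  rcases k with _ | k
  · simp [hm.neg_one_pow]
  · have h_nonneg : (0 : ℤ) ≤ 2 ^ (k + 2) - 3 := by
      have : (2 : ℤ) ^ 2 ≤ 2 ^ (k + 2) := pow_le_pow_right₀ (by norm_num) (by omega)
      linarith
    rw [abs_of_nonneg h_nonneg, (Nat.even_pow.mpr ⟨even_two, k.succ_ne_zero⟩).mul_right m
      |>.neg_one_pow, one_mul]

theorem stmt_0_general (m k : ℕ) (hk : 2 ^ k ∣ m) (hk' : ¬ 2 ^ (k + 1) ∣ m) :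
    8 * ∑ d ∈ m.divisors, (-1 : ℤ) ^ (m + d) * (d : ℤ) =
      8 * |(2 : ℤ) ^ (k + 1) - 3| * (sigma (m / 2 ^ k) : ℤ) := by
  obtain ⟨m', rfl⟩ := hk
  have hm' : Odd m' := by
    rw [Nat.odd_iff, ← Nat.two_dvd_ne_zero]
    rintro ⟨c, rfl⟩
    exact hk' ⟨c, by ring⟩
  rw [Nat.mul_div_cancel_left _ (by positivity), ← neg_one_pow_two_pow_mul_mul_eq_abs hm',
    mul_assoc, mul_assoc, ← sum_divisors_two_pow_mul_neg_one_pow_mul hm']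
  congr 1
  rw [mul_sum]
  exact sum_congr rfl fun d _ => by rw [pow_add, mul_assoc]

theorem stmt_0 (m k : ℕ) (hm : 0 < m) (hk : 2 ^ k ∣ m) (hk' : ¬ 2 ^ (k + 1) ∣ m) :
    8 * ∑ d ∈ m.divisors, (-1 : ℤ) ^ (m + d) * (d : ℤ) =
      8 * |(2 : ℤ) ^ (k + 1) - 3| * (sigma (m / 2 ^ k) : ℤ) :=
  stmt_0_general m k hk hk'
end

section
/- Let m be a positive even integer with 4 ∤ m. Then S(x,m) = S(x/2, m/2) for all real x ≥ 0, where S(x,m) = ∑_{n≤x} r(n)r(n+m) and r is the sum-of-two-squares counting function. More precisely: #{(a,b,c,d)∈ℤ⁴ : c²+d²≤x, a²+b²−c²−d²=m} = #{(a,b,c,d)∈ℤ⁴ : c²+d²≤x/2, a²+b²−c²−d²=m/2}. -/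
/-!
The map `(p, q) ↦ (p + q, p - q)` is injective on `ℤ²`, doubles `p² + q²`, and its image is the
set of pairs of equal parity. Since squares are `0` or `1` mod `4`, a relation
`a² + b² - c² - d² ≡ 2 (mod 4)` forces `a ≡ b` and `c ≡ d (mod 2)`, so every quadruple counted
by `S(x, m)` is the image of exactly one quadruple counted by `S(x / 2, m / 2)`.
-/

def sumDiff (v : ℤ × ℤ) : ℤ × ℤ := (v.1 + v.2, v.1 - v.2)

lemma sumDiff_injective : Function.Injective sumDiff := by
  rintro ⟨p, q⟩ ⟨p', q'⟩ h
  simp only [sumDiff, Prod.mk.injEq] at h ⊢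
  omega

lemma sq_add_sq_sumDiff (v : ℤ × ℤ) :
    (sumDiff v).1 ^ 2 + (sumDiff v).2 ^ 2 = 2 * (v.1 ^ 2 + v.2 ^ 2) := by
  simp only [sumDiff]
  ring

lemma exists_sumDiff_eq_of_even {w : ℤ × ℤ} (h : Even (w.1 + w.2)) : ∃ v, sumDiff v = w := by
  obtain ⟨p, hp⟩ := h
  exact ⟨(p, w.1 - p), by simp only [sumDiff, Prod.ext_iff]; omega⟩

lemma Int.sq_emod_four (t : ℤ) : t ^ 2 % 4 = 0 ∨ t ^ 2 % 4 = 1 := by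
  rcases Int.even_or_odd t with ⟨k, rfl⟩ | ht
  · left
    rw [show (k + k) ^ 2 = 4 * k ^ 2 by ring]
    omega
  · exact Or.inr (Int.sq_mod_four_eq_one_of_odd ht)

lemma Int.even_add_of_even_sq_add_sq {a b : ℤ} (h : Even (a ^ 2 + b ^ 2)) : Even (a + b) := by
  simp only [Int.even_add, Int.even_pow] at h ⊢
  tauto

lemma even_add_of_sq_add_sq_sub_eq_two_mul_odd {a b c d l : ℤ} (hl : Odd l)
    (h : a ^ 2 + b ^ 2 - c ^ 2 - d ^ 2 = 2 * l) : Even (a + b) ∧ Even (c + d) := by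
  rw [Int.odd_iff] at hl
  have : (a ^ 2 + b ^ 2) % 2 = 0 ∧ (c ^ 2 + d ^ 2) % 2 = 0 := by
    rcases Int.sq_emod_four a with ha | ha <;> rcases Int.sq_emod_four b with hb | hb <;>
      rcases Int.sq_emod_four c with hc | hc <;> rcases Int.sq_emod_four d with hd | hd <;> omega
  exact ⟨Int.even_add_of_even_sq_add_sq (Int.even_iff.mpr this.1),
    Int.even_add_of_even_sq_add_sq (Int.even_iff.mpr this.2)⟩

/-- The quadruples `(a, b, c, d)` counted by `S(x, k)`. -/
def sumSqDiffQuadruples (x : ℝ) (k : ℤ) : Set ((ℤ × ℤ) × ℤ × ℤ) :=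
  {q | ((q.2.1 ^ 2 + q.2.2 ^ 2 : ℤ) : ℝ) ≤ x ∧ q.1.1 ^ 2 + q.1.2 ^ 2 - q.2.1 ^ 2 - q.2.2 ^ 2 = k}

lemma image_sumDiff_sumSqDiffQuadruples (x : ℝ) {l : ℤ} (hl : Odd l) :
    Prod.map sumDiff sumDiff '' sumSqDiffQuadruples (x / 2) l = sumSqDiffQuadruples x (2 * l) := by
  ext q
  constructor
  · rintro ⟨⟨v, w⟩, ⟨hle, heq⟩, rfl⟩
    refine ⟨?_, ?_⟩
    · rw [Prod.map_snd, sq_add_sq_sumDiff, Int.cast_mul, Int.cast_two]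
      linarith
    · rw [Prod.map_fst, Prod.map_snd, sub_sub, sq_add_sq_sumDiff, sq_add_sq_sumDiff, ← heq]
      ring
  · rintro ⟨hle, heq⟩
    obtain ⟨hab, hcd⟩ := even_add_of_sq_add_sq_sub_eq_two_mul_odd hl heq
    obtain ⟨v, hv⟩ := exists_sumDiff_eq_of_even hab
    obtain ⟨w, hw⟩ := exists_sumDiff_eq_of_even hcd
    refine ⟨(v, w), ⟨?_, ?_⟩, Prod.ext hv hw⟩
    · rw [← hw, sq_add_sq_sumDiff, Int.cast_mul, Int.cast_two] at hle
      linarith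
    · rw [← hv, ← hw, sub_sub, sq_add_sq_sumDiff, sq_add_sq_sumDiff] at heq
      linarith

theorem card_sumSqDiffQuadruples_two_mul (x : ℝ) {l : ℤ} (hl : Odd l) :
    Nat.card (sumSqDiffQuadruples x (2 * l)) = Nat.card (sumSqDiffQuadruples (x / 2) l) := by
  rw [← image_sumDiff_sumSqDiffQuadruples x hl,
    Nat.card_image_of_injective (sumDiff_injective.prodMap sumDiff_injective)]

theorem stmt_2_general (m : ℕ) (h2 : 2 ∣ m) (h4 : ¬ 4 ∣ m) (x : ℝ) :
    Nat.card {q : (ℤ × ℤ) × ℤ × ℤ //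
        ((q.2.1 ^ 2 + q.2.2 ^ 2 : ℤ) : ℝ) ≤ x ∧
        q.1.1 ^ 2 + q.1.2 ^ 2 - q.2.1 ^ 2 - q.2.2 ^ 2 = (m : ℤ)} =
      Nat.card {q : (ℤ × ℤ) × ℤ × ℤ //
        ((q.2.1 ^ 2 + q.2.2 ^ 2 : ℤ) : ℝ) ≤ x / 2 ∧
        q.1.1 ^ 2 + q.1.2 ^ 2 - q.2.1 ^ 2 - q.2.2 ^ 2 = ((m / 2 : ℕ) : ℤ)} := by
  have hm : (m : ℤ) = 2 * ((m / 2 : ℕ) : ℤ) := by omega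
  have hodd : Odd ((m / 2 : ℕ) : ℤ) := Int.odd_iff.mpr (by omega)
  rw [hm]
  exact card_sumSqDiffQuadruples_two_mul x hodd

theorem stmt_2 (m : ℕ) (hm : 0 < m) (h2 : 2 ∣ m) (h4 : ¬ 4 ∣ m) (x : ℝ) (hx : 0 ≤ x) :
    Nat.card {q : (ℤ × ℤ) × ℤ × ℤ //
        ((q.2.1 ^ 2 + q.2.2 ^ 2 : ℤ) : ℝ) ≤ x ∧
        q.1.1 ^ 2 + q.1.2 ^ 2 - q.2.1 ^ 2 - q.2.2 ^ 2 = (m : ℤ)} =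
      Nat.card {q : (ℤ × ℤ) × ℤ × ℤ //
        ((q.2.1 ^ 2 + q.2.2 ^ 2 : ℤ) : ℝ) ≤ x / 2 ∧
        q.1.1 ^ 2 + q.1.2 ^ 2 - q.2.1 ^ 2 - q.2.2 ^ 2 = ((m / 2 : ℕ) : ℤ)} :=
  stmt_2_general m h2 h4 x
end

section
/- Let d be a positive integer, t > 0 real, and define u(z,w) = |z−w|²/(4·Im z·Im w) for z, w in the upper half-plane. Then the number of integer matrices γ = (a b; u v) with determinant d² such that u(γ·i, i) < t is at most ∑_{0 ≤ n < 4d²t} r(n)·r(4d² + n), where γ·i denotes the Möbius action and r(n) is the number of representations of n as a sum of two squares. -/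
/-!
For `γ = (a b; u v)` with `det γ = D > 0` one computes `u(γ i, i) = ((v - a)² + (b + u)²) / (4D)`,
while `(a + v)² + (b - u)² = 4D + (v - a)² + (b + u)²`. Hence the injective linear map
`γ ↦ ((v - a, b + u), (a + v, b - u))` sends each matrix counted on the left to a representation
of some `n < 4d²t` as a sum of two squares together with a representation of `4d² + n`.
-/

open Complex

/-- `r n` is the number of representations of `n` as an ordered sum of two squares
of integers. -/
noncomputable def r (n : ℕ) : ℕ := Nat.card {p : ℤ × ℤ // p.1 ^ 2 + p.2 ^ 2 = (n : ℤ)}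

/-- The point-pair invariant `u(z,w) = |z−w|²/(4 Im z Im w)` on the upper half-plane,
expressed for complex numbers. -/
noncomputable def uDist (z w : ℂ) : ℝ :=
  ‖z - w‖ ^ 2 / (4 * z.im * w.im)

instance finite_sq_add_sq_eq (n : ℤ) : Finite {p : ℤ × ℤ // p.1 ^ 2 + p.2 ^ 2 = n} := by
  refine Set.Finite.to_subtype ((Set.finite_Icc (-n, -n) (n, n)).subset ?_)
  rintro ⟨x, y⟩ (h : x ^ 2 + y ^ 2 = n)
  have hx : |x| ≤ n := by
    rw [Int.abs_eq_natAbs]; nlinarith [Int.natAbs_le_self_sq x, sq_nonneg y]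
  have hy : |y| ≤ n := by
    rw [Int.abs_eq_natAbs]; nlinarith [Int.natAbs_le_self_sq y, sq_nonneg x]
  rw [abs_le] at hx hy
  exact ⟨⟨hx.1, hy.1⟩, ⟨hx.2, hy.2⟩⟩

theorem card_sigma_sq_add_sq (m N : ℕ) :
    Nat.card (Σ n : Fin N, {p : ℤ × ℤ // p.1 ^ 2 + p.2 ^ 2 = ((n : ℕ) : ℤ)} ×
        {p : ℤ × ℤ // p.1 ^ 2 + p.2 ^ 2 = ((m + n : ℕ) : ℤ)}) =
      ∑ n ∈ Finset.range N, r n * r (m + n) := by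
  rw [Nat.card_sigma, ← Fin.sum_univ_eq_sum_range (fun n => r n * r (m + n))]
  simp only [Nat.card_prod, r]

theorem uDist_mobius_I (a b u v : ℝ) (hdet : 0 < a * v - b * u) :
    uDist ((a * I + b) / (u * I + v)) I =
      ((v - a) ^ 2 + (b + u) ^ 2) / (4 * (a * v - b * u)) := by
  have hS : 0 < u ^ 2 + v ^ 2 := by
    by_contra! h
    have hu : u = 0 := by nlinarith [sq_nonneg u, sq_nonneg v]
    have hv : v = 0 := by nlinarith [sq_nonneg u, sq_nonneg v]
    simp only [hu, hv, mul_zero, sub_self, lt_self_iff_false] at hdet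
  have hnormSq : normSq (u * I + v) = u ^ 2 + v ^ 2 := by
    rw [add_comm, normSq_add_mul_I, add_comm]
  have hw : (u * I + v : ℂ) ≠ 0 := by
    rw [← normSq_pos, hnormSq]; exact hS
  have him : ((a * I + b) / (u * I + v)).im = (a * v - b * u) / (u ^ 2 + v ^ 2) := by
    rw [div_im, hnormSq]
    simp only [add_re, add_im, mul_re, mul_im, ofReal_re, ofReal_im, I_re, I_im]
    ring
  have hsub : (a * I + b) / (u * I + v) - I =
      (((b + u : ℝ) : ℂ) + ((a - v : ℝ) : ℂ) * I) / (u * I + v) := by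
    rw [eq_div_iff hw, sub_mul, div_mul_cancel₀ _ hw]
    push_cast
    linear_combination (-(u : ℂ)) * I_sq
  have hnorm : ‖(a * I + b) / (u * I + v) - I‖ ^ 2 =
      ((b + u) ^ 2 + (a - v) ^ 2) / (u ^ 2 + v ^ 2) := by
    rw [hsub, Complex.sq_norm, normSq_div, hnormSq, normSq_add_mul_I]
  rw [uDist, hnorm, him, I_im]
  field_simp
  ring

theorem card_le_sum_r_mul_r_of_injective {α : Type*} (m N : ℕ) (f : α → (ℤ × ℤ) × (ℤ × ℤ))
    (hf : Function.Injective f) (hlt : ∀ x, (f x).1.1 ^ 2 + (f x).1.2 ^ 2 < N)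
    (heq : ∀ x, (f x).2.1 ^ 2 + (f x).2.2 ^ 2 = m + ((f x).1.1 ^ 2 + (f x).1.2 ^ 2)) :
    Nat.card α ≤ ∑ n ∈ Finset.range N, r n * r (m + n) := by
  rw [← card_sigma_sq_add_sq]
  let n x := ((f x).1.1 ^ 2 + (f x).1.2 ^ 2).toNat
  have hn x : ((n x : ℕ) : ℤ) = (f x).1.1 ^ 2 + (f x).1.2 ^ 2 :=
    Int.toNat_of_nonneg (by positivity)
  refine Nat.card_le_card_of_injective
    (fun x => ⟨⟨n x, by have := hlt x; have := hn x; omega⟩, ⟨(f x).1, (hn x).symm⟩,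
      ⟨(f x).2, by push_cast [hn x]; exact heq x⟩⟩) fun x y hxy => hf ?_
  exact Prod.ext (congrArg (fun z => z.2.1.1) hxy) (congrArg (fun z => z.2.2.1) hxy)

theorem sq_add_sq_lt_of_uDist_lt {a b u v : ℤ} {t : ℝ} (hdet : 0 < a * v - b * u)
    (h : uDist ((a * I + b) / (u * I + v)) I < t) :
    (((v - a) ^ 2 + (b + u) ^ 2 : ℤ) : ℝ) < 4 * ((a * v - b * u : ℤ) : ℝ) * t := by
  have hdet' : (0 : ℝ) < a * v - b * u := by exact_mod_cast hdet
  have := uDist_mobius_I a b u v hdet'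
  simp only [ofReal_intCast] at this
  rw [this, div_lt_iff₀ (by positivity)] at h
  push_cast
  linarith

/-- `((a, b), u, v) ↦ ((v - a, b + u), (a + v, b - u))`, for the matrix `(a b; u v)`. -/
def sqPairs (q : (ℤ × ℤ) × ℤ × ℤ) : (ℤ × ℤ) × (ℤ × ℤ) :=
  ((q.2.2 - q.1.1, q.1.2 + q.2.1), (q.1.1 + q.2.2, q.1.2 - q.2.1))

theorem sqPairs_injective : Function.Injective sqPairs := by
  rintro ⟨⟨a, b⟩, u, v⟩ ⟨⟨a', b'⟩, u', v'⟩ h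
  simp only [sqPairs, Prod.mk.injEq] at h ⊢
  omega

theorem stmt_7_general (d : ℕ) (hd : 0 < d) (t : ℝ) :
    Nat.card {q : (ℤ × ℤ) × ℤ × ℤ //
        q.1.1 * q.2.2 - q.1.2 * q.2.1 = (d : ℤ) ^ 2 ∧
        uDist (((q.1.1 : ℂ) * I + (q.1.2 : ℂ)) / ((q.2.1 : ℂ) * I + (q.2.2 : ℂ))) I < t}
      ≤ ∑ n ∈ Finset.range ⌈4 * (d : ℝ) ^ 2 * t⌉₊, r n * r (4 * d ^ 2 + n) := by
  refine card_le_sum_r_mul_r_of_injective _ _ (fun q => sqPairs q.1)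
    (sqPairs_injective.comp Subtype.val_injective) ?_ ?_
  · rintro ⟨⟨⟨a, b⟩, u, v⟩, hdet, hlt⟩
    dsimp only [sqPairs] at hdet hlt ⊢
    have hlt' := sq_add_sq_lt_of_uDist_lt (by rw [hdet]; positivity) hlt
    rw [hdet] at hlt'
    push_cast at hlt'
    exact_mod_cast hlt'.trans_le (Nat.le_ceil _)
  · rintro ⟨⟨⟨a, b⟩, u, v⟩, hdet, -⟩
    dsimp only [sqPairs] at hdet ⊢
    push_cast
    linear_combination 4 * hdet

theorem stmt_7 (d : ℕ) (hd : 0 < d) (t : ℝ) (ht : 0 < t) :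
    Nat.card {q : (ℤ × ℤ) × ℤ × ℤ //
        q.1.1 * q.2.2 - q.1.2 * q.2.1 = (d : ℤ) ^ 2 ∧
        uDist (((q.1.1 : ℂ) * I + (q.1.2 : ℂ)) / ((q.2.1 : ℂ) * I + (q.2.2 : ℂ))) I < t}
      ≤ ∑ n ∈ Finset.range ⌈4 * (d : ℝ) ^ 2 * t⌉₊, r n * r (4 * d ^ 2 + n) :=
  stmt_7_general d hd t
end

section
/- Let x ≥ 1, m ≥ 1 be real parameters and 0 < θ < 1/2. Define F(Δ,T) = xΔ + x^{1/2}T^{1/2}·min(1,(TΔ)^{-3/2})·(1 + min(m^θ, m^{1/2}T^{-1})) for 0 < Δ < 1 and T ≥ 4. Then if x ≥ m^{3/2−θ}, one has inf_{0<Δ<1} sup_{T≥4} F(Δ,T) ≪ x^{2/3} + m^{1/4+θ/2}·x^{1/2}, and if m ≤ x < m^{3/2−θ}, one has inf_{0<Δ<1} sup_{T≥4} F(Δ,T) ≪ m^{2θ/3}·x^{2/3}, where the implied constants are absolute. -/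
/-- The optimization function arising from bounding the spectral error term. -/
noncomputable def F (x m θ Δ T : ℝ) : ℝ :=
  x * Δ + x ^ ((1 : ℝ) / 2) * T ^ ((1 : ℝ) / 2) *
    min 1 ((T * Δ) ^ (-(3 : ℝ) / 2)) *
    (1 + min (m ^ θ) (m ^ ((1 : ℝ) / 2) * T⁻¹))

/-!
The supremum over `T` is removed by two bounds uniform in `T`, both instances of `min a b ≤ a ^ t * b ^ (1 - t)`:
`T^{1/2} min(1, (TΔ)^{-3/2}) ≤ Δ^{-1/2}` (take `t = 2/3`) and
`T^{1/2} min(m^θ, m^{1/2}T^{-1}) ≤ m^{1/4+θ/2}` (take `t = 1/2`); in the second range one simply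
uses `1 + min(m^θ, ·) ≤ 2m^θ` instead. What is left, `xΔ + c·x^{1/2}Δ^{-1/2}`, is balanced by
`Δ ≍ c^{2/3} x^{-1/3}`, i.e. `Δ ≍ x^{-1/3}` and `Δ ≍ m^{2θ/3} x^{-1/3}` respectively.
-/

open Real

lemma min_le_rpow_mul_rpow {a b t : ℝ} (ha : 0 ≤ a) (hb : 0 ≤ b) (ht₀ : 0 ≤ t) (ht₁ : t ≤ 1) :
    min a b ≤ a ^ t * b ^ (1 - t) := by
  have hmin : 0 ≤ min a b := le_min ha hb
  calc min a b = min a b ^ t * min a b ^ (1 - t) := by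
        rw [← rpow_add' hmin (by norm_num), add_sub_cancel, rpow_one]
    _ ≤ a ^ t * b ^ (1 - t) :=
        mul_le_mul (rpow_le_rpow hmin (min_le_left a b) ht₀)
          (rpow_le_rpow hmin (min_le_right a b) (by linarith)) (rpow_nonneg hmin _)
          (rpow_nonneg ha _)

lemma rpow_half_mul_min_one_le {Δ T : ℝ} (hΔ : 0 < Δ) (hT : 0 < T) :
    T ^ ((1 : ℝ) / 2) * min 1 ((T * Δ) ^ (-(3 : ℝ) / 2)) ≤ Δ ^ (-(1 : ℝ) / 2) := by
  have hmin := min_le_rpow_mul_rpow zero_le_one (rpow_nonneg (mul_pos hT hΔ).le (-(3 : ℝ) / 2))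
    (t := 2 / 3) (by norm_num) (by norm_num)
  have hpow : ((T * Δ) ^ (-(3 : ℝ) / 2)) ^ (1 - (2 : ℝ) / 3) =
      T ^ (-(1 : ℝ) / 2) * Δ ^ (-(1 : ℝ) / 2) := by
    rw [← rpow_mul (mul_pos hT hΔ).le, ← mul_rpow hT.le hΔ.le]; norm_num
  rw [one_rpow, one_mul, hpow] at hmin
  calc T ^ ((1 : ℝ) / 2) * min 1 ((T * Δ) ^ (-(3 : ℝ) / 2))
      ≤ T ^ ((1 : ℝ) / 2) * (T ^ (-(1 : ℝ) / 2) * Δ ^ (-(1 : ℝ) / 2)) := by gcongr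
    _ = Δ ^ (-(1 : ℝ) / 2) := by
        rw [← mul_assoc, ← rpow_add hT]; norm_num

lemma rpow_half_mul_min_le {m θ T : ℝ} (hm : 0 < m) (hT : 0 < T) :
    T ^ ((1 : ℝ) / 2) * min (m ^ θ) (m ^ ((1 : ℝ) / 2) * T⁻¹) ≤ m ^ ((1 : ℝ) / 4 + θ / 2) := by
  have hmin := min_le_rpow_mul_rpow (rpow_nonneg hm.le θ)
    (mul_nonneg (rpow_nonneg hm.le ((1 : ℝ) / 2)) (inv_nonneg.mpr hT.le))
    (t := 1 / 2) (by norm_num) (by norm_num)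
  have hpow : (m ^ θ) ^ ((1 : ℝ) / 2) * (m ^ ((1 : ℝ) / 2) * T⁻¹) ^ (1 - (1 : ℝ) / 2) =
      m ^ ((1 : ℝ) / 4 + θ / 2) * (T ^ ((1 : ℝ) / 2))⁻¹ := by
    rw [mul_rpow (rpow_nonneg hm.le _) (inv_nonneg.mpr hT.le), ← rpow_mul hm.le, ← rpow_mul hm.le,
      ← mul_assoc, ← rpow_add hm, inv_rpow hT.le]
    ring_nf
  rw [hpow] at hmin
  calc T ^ ((1 : ℝ) / 2) * min (m ^ θ) (m ^ ((1 : ℝ) / 2) * T⁻¹)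
      ≤ T ^ ((1 : ℝ) / 2) * (m ^ ((1 : ℝ) / 4 + θ / 2) * (T ^ ((1 : ℝ) / 2))⁻¹) := by gcongr
    _ = m ^ ((1 : ℝ) / 4 + θ / 2) := by
        field_simp

lemma F_le_add_add {x m θ Δ T : ℝ} (hx : 0 ≤ x) (hm : 0 < m) (hΔ : 0 < Δ) (hT : 0 < T) :
    F x m θ Δ T ≤ x * Δ + x ^ ((1 : ℝ) / 2) * Δ ^ (-(1 : ℝ) / 2) +
      x ^ ((1 : ℝ) / 2) * m ^ ((1 : ℝ) / 4 + θ / 2) := by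
  set decay := min 1 ((T * Δ) ^ (-(3 : ℝ) / 2))
  set M := min (m ^ θ) (m ^ ((1 : ℝ) / 2) * T⁻¹)
  have hdecay₀ : 0 ≤ decay := le_min zero_le_one (rpow_nonneg (mul_pos hT hΔ).le _)
  have hdecay₁ : decay ≤ 1 := min_le_left _ _
  have hM : 0 ≤ M := le_min (rpow_nonneg hm.le _) (by positivity)
  have h₁ := rpow_half_mul_min_one_le hΔ hT
  have h₂ := rpow_half_mul_min_le (θ := θ) hm hT
  calc F x m θ Δ T
      = x * Δ + x ^ ((1 : ℝ) / 2) * (T ^ ((1 : ℝ) / 2) * decay) +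
          x ^ ((1 : ℝ) / 2) * decay * (T ^ ((1 : ℝ) / 2) * M) := by
        unfold F; ring
    _ ≤ x * Δ + x ^ ((1 : ℝ) / 2) * Δ ^ (-(1 : ℝ) / 2) +
          x ^ ((1 : ℝ) / 2) * 1 * m ^ ((1 : ℝ) / 4 + θ / 2) := by
        gcongr
    _ = _ := by rw [mul_one]

lemma F_le_add_mul {x m θ Δ T : ℝ} (hx : 0 ≤ x) (hm : 1 ≤ m) (hθ : 0 ≤ θ) (hΔ : 0 < Δ)
    (hT : 0 < T) :
    F x m θ Δ T ≤ x * Δ + 2 * m ^ θ * (x ^ ((1 : ℝ) / 2) * Δ ^ (-(1 : ℝ) / 2)) := by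
  have hM : 1 + min (m ^ θ) (m ^ ((1 : ℝ) / 2) * T⁻¹) ≤ 2 * m ^ θ := by
    linarith [one_le_rpow hm hθ, min_le_left (m ^ θ) (m ^ ((1 : ℝ) / 2) * T⁻¹)]
  have h₁ := rpow_half_mul_min_one_le hΔ hT
  calc F x m θ Δ T
      = x * Δ + x ^ ((1 : ℝ) / 2) * (T ^ ((1 : ℝ) / 2) * min 1 ((T * Δ) ^ (-(3 : ℝ) / 2))) *
          (1 + min (m ^ θ) (m ^ ((1 : ℝ) / 2) * T⁻¹)) := by
        unfold F; ring
    _ ≤ x * Δ + x ^ ((1 : ℝ) / 2) * Δ ^ (-(1 : ℝ) / 2) * (2 * m ^ θ) := by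
        gcongr
    _ = _ := by ring

-- The factor `1/4` keeps `Δ < 1` at `x = 1` and makes `4 ^ (1/2) = 2` exact.
noncomputable def balancedStep (x μ : ℝ) : ℝ := μ * x ^ (-(1 : ℝ) / 3) / 4

lemma balancedStep_pos {x μ : ℝ} (hx : 0 < x) (hμ : 0 < μ) : 0 < balancedStep x μ := by
  unfold balancedStep; positivity

lemma balancedStep_lt_one {x μ : ℝ} (hx : 0 < x) (hμ : μ ≤ x ^ ((1 : ℝ) / 3)) :
    balancedStep x μ < 1 := by
  have h : x ^ ((1 : ℝ) / 3) * x ^ (-(1 : ℝ) / 3) = 1 := by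
    rw [← rpow_add hx]; norm_num
  unfold balancedStep
  nlinarith [rpow_pos_of_pos hx (-(1 : ℝ) / 3)]

lemma mul_balancedStep {x : ℝ} (hx : 0 < x) (μ : ℝ) :
    x * balancedStep x μ = μ * x ^ ((2 : ℝ) / 3) / 4 := by
  have h : x * x ^ (-(1 : ℝ) / 3) = x ^ ((2 : ℝ) / 3) := by
    rw [← rpow_one_add' hx.le (by norm_num)]; norm_num
  unfold balancedStep
  rw [← h]; ring

lemma rpow_half_mul_balancedStep_rpow {x μ : ℝ} (hx : 0 < x) (hμ : 0 < μ) :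
    x ^ ((1 : ℝ) / 2) * balancedStep x μ ^ (-(1 : ℝ) / 2) =
      2 * μ ^ (-(1 : ℝ) / 2) * x ^ ((2 : ℝ) / 3) := by
  have hfour : (4 : ℝ) ^ (-(1 : ℝ) / 2) = 1 / 2 := by
    rw [show (4 : ℝ) = 2 ^ (2 : ℝ) by norm_num, ← rpow_mul (by norm_num)]
    norm_num
  have hx' : x ^ ((1 : ℝ) / 2) * (x ^ (-(1 : ℝ) / 3)) ^ (-(1 : ℝ) / 2) = x ^ ((2 : ℝ) / 3) := by
    rw [← rpow_mul hx.le, ← rpow_add hx]; norm_num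
  unfold balancedStep
  rw [div_rpow (by positivity) (by norm_num), mul_rpow hμ.le (by positivity), hfour, ← hx']
  ring


theorem stmt_11 :
    ∃ K : ℝ, 0 < K ∧ ∀ x m θ : ℝ, 1 ≤ x → 1 ≤ m → 0 < θ → θ < 1 / 2 →
      ((m ^ ((3 : ℝ) / 2 - θ) ≤ x →
          ∃ Δ : ℝ, 0 < Δ ∧ Δ < 1 ∧ ∀ T : ℝ, 4 ≤ T →
            F x m θ Δ T ≤
              K * (x ^ ((2 : ℝ) / 3) + m ^ ((1 : ℝ) / 4 + θ / 2) * x ^ ((1 : ℝ) / 2))) ∧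
        (m ≤ x → x < m ^ ((3 : ℝ) / 2 - θ) →
          ∃ Δ : ℝ, 0 < Δ ∧ Δ < 1 ∧ ∀ T : ℝ, 4 ≤ T →
            F x m θ Δ T ≤ K * (m ^ (2 * θ / 3) * x ^ ((2 : ℝ) / 3)))) := by
  refine ⟨5, by norm_num, fun x m θ hx hm hθ hθ' => ⟨fun _ => ?_, fun hmx _ => ?_⟩⟩
  all_goals have hx₀ : 0 < x := by linarith
  all_goals have hm₀ : 0 < m := by linarith
  · refine ⟨balancedStep x 1, balancedStep_pos hx₀ one_pos,
      balancedStep_lt_one hx₀ (one_le_rpow hx (by norm_num)), fun T hT => ?_⟩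
    have hF := F_le_add_add (θ := θ) hx₀.le hm₀ (balancedStep_pos hx₀ one_pos) (by linarith : 0 < T)
    rw [mul_balancedStep hx₀, rpow_half_mul_balancedStep_rpow hx₀ one_pos, one_rpow] at hF
    have hx₁ : 0 ≤ x ^ ((2 : ℝ) / 3) := by positivity
    have hmx₁ : 0 ≤ m ^ ((1 : ℝ) / 4 + θ / 2) * x ^ ((1 : ℝ) / 2) := by positivity
    linear_combination hF + (11 / 4 : ℝ) * hx₁ + 4 * hmx₁
  · set μ := m ^ (2 * θ / 3)
    have hμ : 0 < μ := rpow_pos_of_pos hm₀ _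
    have hμx : μ ≤ x ^ ((1 : ℝ) / 3) :=
      (rpow_le_rpow_of_exponent_le hm (by linarith)).trans (rpow_le_rpow hm₀.le hmx (by norm_num))
    have hμμ : m ^ θ * μ ^ (-(1 : ℝ) / 2) = μ := by
      rw [← rpow_mul hm₀.le, ← rpow_add hm₀]; congr 1; ring
    refine ⟨balancedStep x μ, balancedStep_pos hx₀ hμ, balancedStep_lt_one hx₀ hμx, fun T hT => ?_⟩
    have hF := F_le_add_mul hx₀.le hm hθ.le (balancedStep_pos hx₀ hμ) (by linarith : 0 < T)
    rw [mul_balancedStep hx₀, rpow_half_mul_balancedStep_rpow hx₀ hμ] at hF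
    have hμx₀ : 0 ≤ μ * x ^ ((2 : ℝ) / 3) := by positivity
    linear_combination hF + 4 * x ^ ((2 : ℝ) / 3) * hμμ + (3 / 4 : ℝ) * hμx₀
end
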